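/- Let k be a field and let φ : W_1 → W_2 be a continuous k-linear homomorphism between profinite topological k-modules. Then φ is strict (it factors as a topological quotient map followed by a topological embedding), the kernel, image, and cokernel of φ with their induced topologies are profinite, and the image of φ is closed in W_2. -/

import Mathlib

variable (k W : Type*) [Field k] [AddCommGroup W] [Module k W] [TopologicalSpace W]

/-- The set of open cofinite submodules of a topological module. -/
def Cofin : Set (Submodule k W) :=
  {W' | IsOpen (W' : Set W) ∧ Module.Finite k (W ⧸ W')}

/-- The canonical map from `W` to the product of its discrete finitely generated
quotients by open cofinite submodules. -/
def canonMap : W → ∀ W' : Cofin k W, W ⧸ W'.1 :=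
  fun w W' => Submodule.Quotient.mk w

/-- The inverse limit, realized as the set of compatible families inside the product. -/
def cofinLimit : Set (∀ W' : Cofin k W, W ⧸ W'.1) :=
  {f | ∀ (W₁ W₂ : Cofin k W) (h : W₁.1 ≤ W₂.1),
    Submodule.mapQ W₁.1 W₂.1 LinearMap.id (by simpa using h) (f W₁) = f W₂}

/-- A topological module is profinite if the canonical map to the inverse limit of its
discrete finitely generated quotients is an isomorphism of topological modules,
i.e. a homeomorphism onto the limit (with its subspace topology from the product). -/
def IsProfinite : Prop :=
  Topology.IsInducing (canonMap k W) ∧ Function.Injective (canonMap k W) ∧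
    Set.range (canonMap k W) = cofinLimit k W

namespace ProfAux

variable {k W}
variable [IsTopologicalAddGroup W]

/-- the coset `x + N` -/
def cos (x : W) (N : Submodule k W) : Set W := {y | y - x ∈ N}

lemma self_mem_cos (x : W) (N : Submodule k W) : x ∈ cos x N := by
  simp [cos]

lemma cos_isOpen {N : Submodule k W} (hN : IsOpen (N : Set W)) (x : W) :
    IsOpen (cos x N) := by
  have : cos x N = (fun y : W => y - x) ⁻¹' (N : Set W) := rfl
  rw [this]
  exact hN.preimage (continuous_id.sub continuous_const)

lemma top_mem_cofin : (⊤ : Submodule k W) ∈ Cofin k W := by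
  refine ⟨by simp, ?_⟩
  have : Subsingleton (W ⧸ (⊤ : Submodule k W)) :=
    Submodule.Quotient.subsingleton_iff.2 rfl
  infer_instance

lemma inf_mem_cofin {N N' : Submodule k W} (h : N ∈ Cofin k W) (h' : N' ∈ Cofin k W) :
    N ⊓ N' ∈ Cofin k W := by
  refine ⟨h.1.inter h'.1, ?_⟩
  have h2 := h.2; have h2' := h'.2
  have : Module.Finite k ((W ⧸ N) × (W ⧸ N')) := by infer_instance
  set f : (W ⧸ (N ⊓ N')) →ₗ[k] (W ⧸ N) × (W ⧸ N') :=
    LinearMap.prod (Submodule.mapQ _ _ LinearMap.id (by simp [inf_le_left]))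
      (Submodule.mapQ _ _ LinearMap.id (by simp [inf_le_right])) with hfdef
  have hf : Function.Injective f := by
    intro a b hab
    obtain ⟨x, rfl⟩ := Submodule.Quotient.mk_surjective _ a
    obtain ⟨y, rfl⟩ := Submodule.Quotient.mk_surjective _ b
    simp only [hfdef, LinearMap.prod_apply, Submodule.mapQ_apply, LinearMap.id_coe, id_eq,
      Function.prod_apply, Prod.mk.injEq, Submodule.Quotient.eq] at hab
    rw [Submodule.Quotient.eq]
    exact ⟨hab.1, hab.2⟩
  exact FiniteDimensional.of_injective f hf

end ProfAux

namespace ProfAux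
set_option linter.unusedSectionVars false

variable {k W}
variable [IsTopologicalAddGroup W]

open Topology Filter

lemma discrete_quot {N : Submodule k W} (hN : IsOpen (N : Set W)) :
    DiscreteTopology (W ⧸ N) := by
  rw [discreteTopology_iff_isOpen_singleton]
  intro b
  obtain ⟨x, rfl⟩ := Submodule.Quotient.mk_surjective _ b
  rw [← (Submodule.isOpenQuotientMap_mkQ N).isQuotientMap.isOpen_preimage]
  have : N.mkQ ⁻¹' {Submodule.Quotient.mk x} = cos x N := by
    ext y
    simp only [Set.mem_preimage, Set.mem_singleton_iff, Submodule.mkQ_apply,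
      Submodule.Quotient.eq, cos, Set.mem_setOf_eq]
  rw [this]
  exact cos_isOpen hN x

lemma finsetInf_mem_cofin {ι : Type*} (I : Finset ι) (f : ι → Submodule k W)
    (hf : ∀ i ∈ I, f i ∈ Cofin k W) : I.inf f ∈ Cofin k W := by
  classical
  induction I using Finset.induction_on with
  | empty => simpa using top_mem_cofin
  | insert _ _ hni ih =>
    rw [Finset.inf_insert]
    exact inf_mem_cofin (hf _ (Finset.mem_insert_self _ _))
      (ih fun i hi => hf i (Finset.mem_insert_of_mem hi))

/-- neighborhood basis property -/
def HB : Prop := ∀ (x : W) (U : Set W), U ∈ 𝓝 x → ∃ N ∈ Cofin k W, cos x N ⊆ U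

variable (k) in
lemma cos_mem_nhds {N : Submodule k W} (hN : N ∈ Cofin k W) (x : W) : cos x N ∈ 𝓝 x :=
  (cos_isOpen hN.1 x).mem_nhds (self_mem_cos x N)

lemma continuous_canonMap : Continuous (canonMap k W) :=
  continuous_pi fun _ => continuous_quot_mk

lemma hb_of_inducing (h : Topology.IsInducing (canonMap k W)) : HB (k := k) (W := W) := by
  intro x U hU
  rw [h.nhds_eq_comap] at hU
  obtain ⟨t, ht, hsub⟩ := Filter.mem_comap.1 hU
  obtain ⟨O, hOt, hO, hxO⟩ := mem_nhds_iff.1 ht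
  obtain ⟨I, u, hu, hpi⟩ := isOpen_pi_iff.1 hO _ hxO
  refine ⟨I.inf Subtype.val, finsetInf_mem_cofin I _ (fun i _ => i.2), ?_⟩
  intro y hy
  apply hsub
  apply Set.mem_preimage.2 <| hOt <| hpi ?_
  intro i hi
  have : canonMap k W y i = canonMap k W x i := by
    show (Submodule.Quotient.mk y : W ⧸ i.1) = Submodule.Quotient.mk x
    rw [Submodule.Quotient.eq]
    exact Finset.inf_le (f := Subtype.val) hi hy
  rw [this]
  exact (hu i hi).2

lemma inducing_of_hb (hb : HB (k := k) (W := W)) : Topology.IsInducing (canonMap k W) := by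
  rw [isInducing_iff_nhds]
  intro x
  refine le_antisymm (continuous_canonMap.continuousAt (x := x)).le_comap ?_
  intro U hU
  obtain ⟨N, hN, hsub⟩ := hb x U hU
  rw [Filter.mem_comap]
  haveI := discrete_quot (k := k) (W := W) hN.1
  refine ⟨(fun g : ∀ W' : Cofin k W, W ⧸ W'.1 => g ⟨N, hN⟩) ⁻¹' {canonMap k W x ⟨N, hN⟩},
    ((continuous_apply _).isOpen_preimage _ (isOpen_discrete _)).mem_nhds rfl, ?_⟩
  refine Set.Subset.trans ?_ hsub
  intro y hy
  have : (Submodule.Quotient.mk y : W ⧸ N) = Submodule.Quotient.mk x := hy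
  rw [Submodule.Quotient.eq] at this
  exact this

lemma mem_closure_iff_cofin (hb : HB (k := k) (W := W)) (S : Set W) (x : W) :
    x ∈ closure S ↔ ∀ N ∈ Cofin k W, ∃ s ∈ S, x - s ∈ N := by
  rw [mem_closure_iff_nhds]
  constructor
  · intro h N hN
    obtain ⟨y, hy1, hy2⟩ := h _ (cos_mem_nhds k hN x)
    exact ⟨y, hy2, by simpa using N.neg_mem hy1⟩
  · intro h t ht
    obtain ⟨N, hN, hsub⟩ := hb x t ht
    obtain ⟨s, hs, hxs⟩ := h N hN
    exact ⟨s, hsub (by simpa [cos] using N.neg_mem hxs), hs⟩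

lemma eq_zero_of_forall_mem (hinj : Function.Injective (canonMap k W)) {x : W}
    (hx : ∀ N ∈ Cofin k W, x ∈ N) : x = 0 := by
  apply hinj
  funext N
  show (Submodule.Quotient.mk x : W ⧸ N.1) = Submodule.Quotient.mk 0
  rw [Submodule.Quotient.eq]
  simpa using hx N.1 N.2

lemma submodule_isOpen_mono {N A : Submodule k W} (hN : IsOpen (N : Set W)) (h : N ≤ A) :
    IsOpen (A : Set W) :=
  AddSubgroup.isOpen_mono (H₁ := N.toAddSubgroup) (H₂ := A.toAddSubgroup) h hN

lemma submodule_isClosed_of_isOpen {N : Submodule k W} (hN : IsOpen (N : Set W)) :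
    IsClosed (N : Set W) :=
  AddSubgroup.isClosed_of_isOpen N.toAddSubgroup hN

end ProfAux

namespace ProfAux
set_option linter.unusedSectionVars false
open Topology Filter Module

/-- In a finite-dimensional space, a downward-directed family of nonempty affine
subspaces has a least element. -/
lemma exists_least {k V : Type*} [Field k] [AddCommGroup V] [Module k V]
    [FiniteDimensional k V] (F : Set (AffineSubspace k V)) (hne : F.Nonempty)
    (hF : ∀ s ∈ F, (s : Set V).Nonempty)
    (hdir : ∀ s ∈ F, ∀ t ∈ F, ∃ u ∈ F, u ≤ s ∧ u ≤ t) :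
    ∃ m ∈ F, ∀ s ∈ F, m ≤ s := by
  have hmem := Nat.sInf_mem (hne.image (fun s : AffineSubspace k V => finrank k s.direction))
  rw [Set.mem_image] at hmem
  obtain ⟨m, hmF, hm⟩ := hmem
  refine ⟨m, hmF, fun s hsF => ?_⟩
  obtain ⟨u, huF, hum, hus⟩ := hdir m hmF s hsF
  have h1 : sInf ((fun s : AffineSubspace k V => finrank k s.direction) '' F) ≤
      finrank k u.direction := Nat.sInf_le ⟨u, huF, rfl⟩
  have h2 : u.direction = m.direction :=
    Submodule.eq_of_le_of_finrank_le (AffineSubspace.direction_le hum) (hm.symm ▸ h1)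
  obtain ⟨p, hpu⟩ := hF u huF
  have : u = m := AffineSubspace.ext_of_direction_eq h2 ⟨p, hpu, hum hpu⟩
  exact this ▸ hus

/-- Zorn's lemma for minimal elements. -/
lemma zorn_min {α : Type*} [PartialOrder α] (s : Set α)
    (ih : ∀ c ⊆ s, IsChain (· ≤ ·) c → ∃ lb ∈ s, ∀ z ∈ c, lb ≤ z) :
    ∃ m ∈ s, ∀ z ∈ s, z ≤ m → z = m := by
  obtain ⟨m, hm⟩ := zorn_le₀ (α := αᵒᵈ) s (fun c hcs hc => ih c hcs hc.symm)
  exact ⟨m, hm.1, fun z hz hzm => le_antisymm hzm (hm.2 hz hzm)⟩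

lemma amap_mono {k V₁ V₂ : Type*} [Field k] [AddCommGroup V₁] [Module k V₁]
    [AddCommGroup V₂] [Module k V₂] (f : V₁ →ᵃ[k] V₂) {s t : AffineSubspace k V₁}
    (h : s ≤ t) : s.map f ≤ t.map f :=
  (AffineSubspace.gc_map_comap f).monotone_l h

variable {k W : Type*} [Field k] [AddCommGroup W] [Module k W] [TopologicalSpace W]
  [IsTopologicalAddGroup W]

/-- transition map between quotients -/
def tr {N N' : Cofin k W} (h : N.1 ≤ N'.1) : (W ⧸ N.1) →ₗ[k] (W ⧸ N'.1) :=
  Submodule.mapQ _ _ LinearMap.id (by simpa using h)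

lemma tr_mk {N N' : Cofin k W} (h : N.1 ≤ N'.1) (x : W) :
    tr h (Submodule.Quotient.mk x) = Submodule.Quotient.mk x := by
  simp [tr, Submodule.mapQ_apply]

lemma tr_tr {N N' N'' : Cofin k W} (h : N.1 ≤ N'.1) (h' : N'.1 ≤ N''.1) (x : W ⧸ N.1) :
    tr h' (tr h x) = tr (le_trans h h') x := by
  obtain ⟨y, rfl⟩ := Submodule.Quotient.mk_surjective _ x
  simp [tr_mk]

lemma tr_self {N : Cofin k W} (h : N.1 ≤ N.1) (x : W ⧸ N.1) : tr h x = x := by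
  obtain ⟨y, rfl⟩ := Submodule.Quotient.mk_surjective _ x
  simp [tr_mk]

/-- transition as affine map -/
def tra {N N' : Cofin k W} (h : N.1 ≤ N'.1) : (W ⧸ N.1) →ᵃ[k] (W ⧸ N'.1) :=
  (tr h).toAffineMap

lemma map_tra_tra {N N' N'' : Cofin k W} (h : N.1 ≤ N'.1) (h' : N'.1 ≤ N''.1)
    (s : AffineSubspace k (W ⧸ N.1)) :
    (s.map (tra h)).map (tra h') = s.map (tra (le_trans h h')) := by
  rw [AffineSubspace.map_map]
  congr 1
  ext x
  exact tr_tr h h' x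

lemma map_tra_self {N : Cofin k W} (h : N.1 ≤ N.1) (s : AffineSubspace k (W ⧸ N.1)) :
    s.map (tra h) = s := by
  have : tra (k := k) (W := W) h = AffineMap.id k (W ⧸ N.1) := by
    ext x; exact tr_self h x
  rw [this, AffineSubspace.map_id]

/-- inf in Cofin -/
def infC (N N' : Cofin k W) : Cofin k W := ⟨N.1 ⊓ N'.1, inf_mem_cofin N.2 N'.2⟩

lemma infC_le_left (N N' : Cofin k W) : (infC N N').1 ≤ N.1 := inf_le_left
lemma infC_le_right (N N' : Cofin k W) : (infC N N').1 ≤ N'.1 := inf_le_right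

end ProfAux

namespace ProfAux
set_option linter.unusedSectionVars false
open Topology Filter Module

variable {k W : Type*} [Field k] [AddCommGroup W] [Module k W] [TopologicalSpace W]
  [IsTopologicalAddGroup W]

theorem lim_exists (hW : IsProfinite k W)
    (S : ∀ N : Cofin k W, AffineSubspace k (W ⧸ N.1))
    (hSne : ∀ N, (S N : Set (W ⧸ N.1)).Nonempty)
    (hScompat : ∀ (N N' : Cofin k W) (h : N.1 ≤ N'.1), (S N).map (tra h) ≤ S N') :
    ∃ w : W, ∀ N, Submodule.Quotient.mk w ∈ S N := by
  classical
  set 𝒮 : Set (∀ N : Cofin k W, AffineSubspace k (W ⧸ N.1)) :=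
    {T | (∀ N, (T N : Set (W ⧸ N.1)).Nonempty) ∧ (∀ N, T N ≤ S N) ∧
      ∀ (N N' : Cofin k W) (h : N.1 ≤ N'.1), (T N).map (tra h) ≤ T N'} with h𝒮
  have hS𝒮 : S ∈ 𝒮 := ⟨hSne, fun _ => le_rfl, hScompat⟩
  obtain ⟨T, hT𝒮, hTmin⟩ := zorn_min 𝒮 (by
    intro c hc𝒮 hchain
    rcases c.eq_empty_or_nonempty with rfl | hcne
    · exact ⟨S, hS𝒮, by simp⟩
    have key : ∀ N : Cofin k W, ∃ m ∈ (fun T => T N) '' c,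
        ∀ s ∈ (fun T => T N) '' c, m ≤ s := by
      intro N
      haveI : Module.Finite k (W ⧸ N.1) := N.2.2
      apply exists_least _ (hcne.image _)
      · rintro s ⟨T, hTc, rfl⟩
        exact (hc𝒮 hTc).1 N
      · rintro s ⟨T, hTc, rfl⟩ t ⟨T', hT'c, rfl⟩
        rcases eq_or_ne T T' with rfl | hne
        · exact ⟨T N, ⟨T, hTc, rfl⟩, le_rfl, le_rfl⟩
        rcases hchain hTc hT'c hne with h | h
        · exact ⟨T N, ⟨T, hTc, rfl⟩, le_rfl, h N⟩
        · exact ⟨T' N, ⟨T', hT'c, rfl⟩, h N, le_rfl⟩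
    choose lb hlbmem hlbleast using key
    refine ⟨lb, ⟨?_, ?_, ?_⟩, ?_⟩
    · intro N; obtain ⟨T, hTc, hEq⟩ := hlbmem N; rw [← hEq]; exact (hc𝒮 hTc).1 N
    · intro N; obtain ⟨T, hTc, hEq⟩ := hlbmem N; rw [← hEq]; exact (hc𝒮 hTc).2.1 N
    · intro N N' h
      obtain ⟨T₁, hT₁c, hEq⟩ := hlbmem N'
      rw [← hEq]
      calc (lb N).map (tra h) ≤ (T₁ N).map (tra h) :=
            amap_mono _ (hlbleast N _ ⟨T₁, hT₁c, rfl⟩)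
        _ ≤ T₁ N' := (hc𝒮 hT₁c).2.2 N N' h
    · exact fun T hTc N => hlbleast N _ ⟨T, hTc, rfl⟩)
  have hTne : ∀ N, (T N : Set (W ⧸ N.1)).Nonempty := hT𝒮.1
  have hTS : ∀ N, T N ≤ S N := hT𝒮.2.1
  have hTcompat := hT𝒮.2.2
  -- surjectivity of transitions on the minimal system
  have hsurj : ∀ (N' N : Cofin k W) (h : N'.1 ≤ N.1), T N ≤ (T N').map (tra h) := by
    have key : ∀ N : Cofin k W,
        ∃ m ∈ {s | ∃ (N₂ : Cofin k W) (h : N₂.1 ≤ N.1), s = (T N₂).map (tra h)},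
        ∀ s ∈ {s | ∃ (N₂ : Cofin k W) (h : N₂.1 ≤ N.1), s = (T N₂).map (tra h)}, m ≤ s := by
      intro N
      haveI : Module.Finite k (W ⧸ N.1) := N.2.2
      apply exists_least
      · exact ⟨T N, N, le_rfl, (map_tra_self _ _).symm⟩
      · rintro s ⟨N₂, h₂, rfl⟩
        rw [AffineSubspace.coe_map]
        exact (hTne N₂).image _
      · rintro s ⟨N₂, h₂, rfl⟩ t ⟨N₃, h₃, rfl⟩
        refine ⟨(T (infC N₂ N₃)).map (tra (le_trans (infC_le_left N₂ N₃) h₂)),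
          ⟨infC N₂ N₃, le_trans (infC_le_left N₂ N₃) h₂, rfl⟩, ?_, ?_⟩
        · calc (T (infC N₂ N₃)).map (tra (le_trans (infC_le_left N₂ N₃) h₂))
              = ((T (infC N₂ N₃)).map (tra (infC_le_left N₂ N₃))).map (tra h₂) :=
                (map_tra_tra _ _ _).symm
            _ ≤ (T N₂).map (tra h₂) := amap_mono _ (hTcompat _ _ _)
        · calc (T (infC N₂ N₃)).map (tra (le_trans (infC_le_left N₂ N₃) h₂))
              = ((T (infC N₂ N₃)).map (tra (infC_le_right N₂ N₃))).map (tra h₃) :=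
                (map_tra_tra _ _ _).symm
            _ ≤ (T N₃).map (tra h₃) := amap_mono _ (hTcompat _ _ _)
    choose G hGmem hGleast using key
    have hG𝒮 : G ∈ 𝒮 := by
      refine ⟨?_, ?_, ?_⟩
      · intro N
        obtain ⟨N₂, h₂, hEq⟩ := hGmem N
        rw [hEq, AffineSubspace.coe_map]
        exact (hTne N₂).image _
      · intro N
        obtain ⟨N₂, h₂, hEq⟩ := hGmem N
        rw [hEq]
        exact le_trans (hTcompat N₂ N h₂) (hTS N)
      · intro N N' h
        obtain ⟨N₂, h₂, hEq⟩ := hGmem N'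
        calc (G N).map (tra h)
            ≤ ((T (infC N₂ N)).map (tra (infC_le_right N₂ N))).map (tra h) :=
              amap_mono _ (hGleast N _ ⟨infC N₂ N, infC_le_right N₂ N, rfl⟩)
          _ = (T (infC N₂ N)).map (tra (le_trans (infC_le_left N₂ N) h₂)) := map_tra_tra _ _ _
          _ = ((T (infC N₂ N)).map (tra (infC_le_left N₂ N))).map (tra h₂) :=
              (map_tra_tra _ _ _).symm
          _ ≤ (T N₂).map (tra h₂) := amap_mono _ (hTcompat _ _ _)
          _ = G N' := hEq.symm
    have hGle : G ≤ T := fun N => hGleast N _ ⟨N, le_rfl, (map_tra_self _ _).symm⟩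
    have hGT : G = T := hTmin G hG𝒮 hGle
    intro N' N h
    have := hGleast N _ ⟨N', h, rfl⟩
    rw [hGT] at this
    exact this
  -- each T N is a singleton
  have huniq : ∀ (N₀ : Cofin k W) (t : W ⧸ N₀.1), t ∈ T N₀ → ∀ x ∈ T N₀, x = t := by
    intro N₀ t ht
    set X : ∀ N : Cofin k W, AffineSubspace k (W ⧸ (infC N N₀).1) := fun N =>
      T (infC N N₀) ⊓
        AffineSubspace.comap (tra (infC_le_right N N₀)) (AffineSubspace.mk' t ⊥) with hX
    set T'' : ∀ N : Cofin k W, AffineSubspace k (W ⧸ N.1) := fun N =>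
      (X N).map (tra (infC_le_left N N₀)) with hT''
    have hXne : ∀ N, (X N : Set (W ⧸ (infC N N₀).1)).Nonempty := by
      intro N
      obtain ⟨z, hz, hzt⟩ := AffineSubspace.mem_map.1 (hsurj (infC N N₀) N₀ (infC_le_right N N₀) ht)
      refine ⟨z, (AffineSubspace.mem_inf_iff _ _ _).2 ⟨hz, AffineSubspace.mem_comap.2 ?_⟩⟩
      rw [hzt]
      simp [AffineSubspace.mem_mk']
    have hXmap : ∀ (N N' : Cofin k W) (h : N.1 ≤ N'.1),
        (X N).map (tra (inf_le_inf h le_rfl : (infC N N₀).1 ≤ (infC N' N₀).1)) ≤ X N' := by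
      intro N N' h
      apply le_inf
      · exact le_trans (amap_mono _ inf_le_left) (hTcompat _ _ _)
      · rintro y hy
        obtain ⟨z, hz, rfl⟩ := AffineSubspace.mem_map.1 hy
        rw [AffineSubspace.mem_comap]
        have hz2 := ((AffineSubspace.mem_inf_iff _ _ _).1 hz).2
        rw [AffineSubspace.mem_comap] at hz2
        have heq : tra (infC_le_right N' N₀) (tra (inf_le_inf h le_rfl) z)
            = tra (infC_le_right N N₀) z :=
          tr_tr (N := infC N N₀) (N' := infC N' N₀) (N'' := N₀) (inf_le_inf h le_rfl)
            (infC_le_right N' N₀) z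
        rw [heq]
        exact hz2
    have hT''𝒮 : T'' ∈ 𝒮 := by
      refine ⟨?_, ?_, ?_⟩
      · intro N
        rw [hT'', AffineSubspace.coe_map]
        exact (hXne N).image _
      · intro N
        exact le_trans (le_trans (amap_mono _ inf_le_left) (hTcompat _ _ _)) (hTS N)
      · intro N N' h
        calc (T'' N).map (tra h)
            = (X N).map (tra (le_trans (infC_le_left N N₀) h)) := map_tra_tra _ _ _
          _ = ((X N).map (tra (inf_le_inf h le_rfl))).map (tra (infC_le_left N' N₀)) :=
              (map_tra_tra _ _ _).symm
          _ ≤ (X N').map (tra (infC_le_left N' N₀)) := amap_mono _ (hXmap N N' h)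
          _ = T'' N' := rfl
    have hT''le : T'' ≤ T := fun N =>
      le_trans (amap_mono _ inf_le_left) (hTcompat _ _ _)
    have hT''T : T'' = T := hTmin T'' hT''𝒮 hT''le
    intro x hx
    rw [← hT''T] at hx
    obtain ⟨z, hz, rfl⟩ := AffineSubspace.mem_map.1 hx
    have hz2 := ((AffineSubspace.mem_inf_iff _ _ _).1 hz).2
    rw [AffineSubspace.mem_comap, AffineSubspace.mem_mk'] at hz2
    have : tra (infC_le_right N₀ N₀) z = t := by
      have h0 := Submodule.mem_bot k |>.1 hz2
      rw [vsub_eq_sub, sub_eq_zero] at h0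
      exact h0
    exact this
  -- extract the compatible family
  have hf : ∀ N : Cofin k W, ∃ x, x ∈ T N := fun N => hTne N
  choose f hfT using hf
  have hfcl : f ∈ cofinLimit k W := by
    intro N N' h
    have h1 : tra h (f N) ∈ (T N).map (tra h) :=
      AffineSubspace.mem_map.2 ⟨f N, hfT N, rfl⟩
    exact huniq N' (f N') (hfT N') _ (hTcompat N N' h h1)
  rw [← hW.2.2] at hfcl
  obtain ⟨w, hw⟩ := hfcl
  refine ⟨w, fun N => ?_⟩
  have : Submodule.Quotient.mk w = f N := congrFun hw N
  rw [this]
  exact hTS N (hfT N)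

end ProfAux

namespace ProfAux
set_option linter.unusedSectionVars false
open Topology Filter Module

variable {k W : Type*} [Field k] [AddCommGroup W] [Module k W] [TopologicalSpace W]
  [IsTopologicalAddGroup W]

lemma cos_isClosed {N : Submodule k W} (hN : IsClosed (N : Set W)) (x : W) :
    IsClosed (cos x N) := by
  have : cos x N = (fun y : W => y - x) ⁻¹' (N : Set W) := rfl
  rw [this]
  exact hN.preimage (continuous_id.sub continuous_const)

lemma canonMap_mem_cofinLimit (w : W) : canonMap k W w ∈ cofinLimit k W := by
  intro N N' h
  show Submodule.mapQ _ _ _ _ (Submodule.Quotient.mk w) = Submodule.Quotient.mk w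
  simp [Submodule.mapQ_apply]

/-- the image of a coset in a quotient, as an affine subspace -/
lemma coe_mk'_eq (x : W) (A : Submodule k W) (N : Submodule k W) :
    ((AffineSubspace.mk' (Submodule.Quotient.mk x : W ⧸ N) (Submodule.map N.mkQ A)) :
      Set (W ⧸ N)) = N.mkQ '' (cos x A) := by
  ext y
  rw [SetLike.mem_coe, AffineSubspace.mem_mk']
  constructor
  · intro hy
    rw [vsub_eq_sub, Submodule.mem_map] at hy
    obtain ⟨a, haA, ha⟩ := hy
    refine ⟨a + x, by simp [cos, haA], ?_⟩
    rw [Submodule.mkQ_apply] at ha ⊢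
    rw [Submodule.Quotient.mk_add]
    rw [ha]
    abel
  · rintro ⟨c, hc, rfl⟩
    rw [vsub_eq_sub, Submodule.mem_map]
    exact ⟨c - x, hc, by rw [Submodule.mkQ_apply, Submodule.mkQ_apply,
      Submodule.Quotient.mk_sub]⟩

lemma map_tra_mk' {N N' : Cofin k W} (h : N.1 ≤ N'.1) (x : W) (A : Submodule k W) :
    (AffineSubspace.mk' (Submodule.Quotient.mk x : W ⧸ N.1) (Submodule.map N.1.mkQ A)).map
        (tra h) =
      AffineSubspace.mk' (Submodule.Quotient.mk x : W ⧸ N'.1) (Submodule.map N'.1.mkQ A) := by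
  apply SetLike.coe_injective
  rw [AffineSubspace.coe_map, coe_mk'_eq, coe_mk'_eq, ← Set.image_comp]
  apply Set.image_congr
  intro y _
  show tra h (Submodule.Quotient.mk y) = Submodule.Quotient.mk y
  exact tr_mk h y

theorem fip (hW : IsProfinite k W) {ι : Type*} [Nonempty ι] (x : ι → W)
    (A : ι → Submodule k W) (hcl : ∀ i, IsClosed ((A i) : Set W))
    (hdir : ∀ i j, ∃ l, cos (x l) (A l) ⊆ cos (x i) (A i) ∧
      cos (x l) (A l) ⊆ cos (x j) (A j)) :
    ∃ w : W, ∀ i, w ∈ cos (x i) (A i) := by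
  classical
  set mem : ∀ N : Cofin k W, ι → AffineSubspace k (W ⧸ N.1) := fun N i =>
    AffineSubspace.mk' (Submodule.Quotient.mk (x i)) (Submodule.map N.1.mkQ (A i)) with hmem
  have hmemcoe : ∀ (N : Cofin k W) (i : ι), (mem N i : Set (W ⧸ N.1)) = N.1.mkQ '' cos (x i) (A i) :=
    fun N i => coe_mk'_eq _ _ _
  have hmemle : ∀ (N : Cofin k W) (i j : ι), cos (x i) (A i) ⊆ cos (x j) (A j) →
      mem N i ≤ mem N j := by
    intro N i j hsub
    have : (mem N i : Set (W ⧸ N.1)) ⊆ (mem N j : Set (W ⧸ N.1)) := by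
      rw [hmemcoe, hmemcoe]
      exact Set.image_mono hsub
    exact this
  have key : ∀ N : Cofin k W, ∃ m ∈ Set.range (mem N), ∀ s ∈ Set.range (mem N), m ≤ s := by
    intro N
    haveI : Module.Finite k (W ⧸ N.1) := N.2.2
    apply exists_least
    · exact Set.range_nonempty _
    · rintro s ⟨i, rfl⟩
      rw [hmemcoe]
      exact Set.Nonempty.image _ ⟨_, self_mem_cos (x i) (A i)⟩
    · rintro s ⟨i, rfl⟩ t ⟨j, rfl⟩
      obtain ⟨l, hl1, hl2⟩ := hdir i j
      exact ⟨mem N l, ⟨l, rfl⟩, hmemle N l i hl1, hmemle N l j hl2⟩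
  choose S hSmem hSleast using key
  have hScompat : ∀ (N N' : Cofin k W) (h : N.1 ≤ N'.1), (S N).map (tra h) ≤ S N' := by
    intro N N' h
    obtain ⟨i, hEq⟩ := hSmem N'
    calc (S N).map (tra h) ≤ (mem N i).map (tra h) :=
          amap_mono _ (hSleast N _ ⟨i, rfl⟩)
      _ = mem N' i := map_tra_mk' h _ _
      _ = S N' := hEq
  obtain ⟨w, hw⟩ := lim_exists hW S
    (fun N => by
      obtain ⟨i, hEq⟩ := hSmem N
      rw [← hEq, hmemcoe]
      exact Set.Nonempty.image _ ⟨_, self_mem_cos (x i) (A i)⟩)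
    hScompat
  refine ⟨w, fun i => ?_⟩
  rw [← (cos_isClosed (hcl i) (x i)).closure_eq]
  rw [mem_closure_iff_cofin (hb_of_inducing hW.1)]
  intro N hN
  have h1 : Submodule.Quotient.mk w ∈ mem ⟨N, hN⟩ i := hSleast ⟨N, hN⟩ _ ⟨i, rfl⟩ (hw ⟨N, hN⟩)
  rw [← SetLike.mem_coe, hmemcoe] at h1
  obtain ⟨c, hc, hcw⟩ := h1
  refine ⟨c, hc, ?_⟩
  rw [Submodule.mkQ_apply] at hcw
  rw [← Submodule.Quotient.eq]
  exact hcw.symm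

end ProfAux

namespace ProfAux
set_option linter.unusedSectionVars false
open Topology Filter Module

section TwoSpaces
variable {k W₁ W₂ : Type*} [Field k]
  [AddCommGroup W₁] [Module k W₁] [TopologicalSpace W₁] [IsTopologicalAddGroup W₁]
  [AddCommGroup W₂] [Module k W₂] [TopologicalSpace W₂] [IsTopologicalAddGroup W₂]

theorem closed_range (h₁ : IsProfinite k W₁) (h₂ : IsProfinite k W₂)
    (φ : W₁ →ₗ[k] W₂) (hφ : Continuous φ) : IsClosed (Set.range φ) := by
  apply isClosed_of_closure_subset
  intro w₂ hw₂
  rw [mem_closure_iff_cofin (hb_of_inducing h₂.1)] at hw₂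
  have hex : ∀ M : Cofin k W₂, ∃ u : W₁, w₂ - φ u ∈ M.1 := by
    intro M
    obtain ⟨s, ⟨u, rfl⟩, h⟩ := hw₂ M.1 M.2
    exact ⟨u, h⟩
  choose u hu using hex
  haveI : Nonempty ↥(Cofin k W₂) := ⟨⟨⊤, top_mem_cofin⟩⟩
  have hcl : ∀ M : Cofin k W₂, IsClosed ((M.1.comap φ : Submodule k W₁) : Set W₁) := by
    intro M
    have : ((M.1.comap φ : Submodule k W₁) : Set W₁) = φ ⁻¹' (M.1 : Set W₂) := rfl
    rw [this]
    exact (submodule_isClosed_of_isOpen M.2.1).preimage hφ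
  obtain ⟨w, hw⟩ := fip h₁ u (fun M : Cofin k W₂ => (M.1).comap φ) hcl (by
    intro i j
    refine ⟨infC i j, ?_, ?_⟩
    · intro y hy
      have hy2 : y - u (infC i j) ∈ (infC i j).1.comap φ := hy
      rw [Submodule.mem_comap, map_sub] at hy2
      have hy' : φ y - φ (u (infC i j)) ∈ i.1 := (infC_le_left i j) hy2
      have hdiff : φ (u (infC i j)) - φ (u i) ∈ i.1 := by
        have h1 : w₂ - φ (u (infC i j)) ∈ i.1 := (infC_le_left i j) (hu (infC i j))
        have h2 : w₂ - φ (u i) ∈ i.1 := hu i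
        have := sub_mem h2 h1
        simpa using this
      show y - u i ∈ i.1.comap φ
      rw [Submodule.mem_comap]
      have : φ y - φ (u i) ∈ i.1 := by
        have := add_mem hy' hdiff
        simpa using this
      simpa [map_sub] using this
    · intro y hy
      have hy2 : y - u (infC i j) ∈ (infC i j).1.comap φ := hy
      rw [Submodule.mem_comap, map_sub] at hy2
      have hy' : φ y - φ (u (infC i j)) ∈ j.1 := (infC_le_right i j) hy2
      have hdiff : φ (u (infC i j)) - φ (u j) ∈ j.1 := by
        have h1 : w₂ - φ (u (infC i j)) ∈ j.1 := (infC_le_right i j) (hu (infC i j))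
        have h2 : w₂ - φ (u j) ∈ j.1 := hu j
        have := sub_mem h2 h1
        simpa using this
      show y - u j ∈ j.1.comap φ
      rw [Submodule.mem_comap]
      have : φ y - φ (u j) ∈ j.1 := by
        have := add_mem hy' hdiff
        simpa using this
      simpa [map_sub] using this)
  have hmem : ∀ M ∈ Cofin k W₂, φ w - w₂ ∈ M := by
    intro M hM
    have h1 : w - u ⟨M, hM⟩ ∈ M.comap φ := hw ⟨M, hM⟩
    have h2 : φ w - φ (u ⟨M, hM⟩) ∈ M := by simpa [map_sub] using h1
    have h3 := hu ⟨M, hM⟩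
    have := sub_mem h2 h3
    have heq : φ w - φ (u ⟨M, hM⟩) - (w₂ - φ (u ⟨M, hM⟩)) = φ w - w₂ := by abel
    rwa [heq] at this
  have : φ w - w₂ = 0 := eq_zero_of_forall_mem h₂.2.1 hmem
  rw [sub_eq_zero] at this
  exact ⟨w, this⟩

end TwoSpaces
end ProfAux

namespace ProfAux
set_option linter.unusedSectionVars false
open Topology Filter Module

variable {k W : Type*} [Field k] [AddCommGroup W] [Module k W] [TopologicalSpace W]
  [IsTopologicalAddGroup W]

theorem profinite_closed_submodule (hW : IsProfinite k W) (A : Submodule k W)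
    (hA : IsClosed (A : Set W)) : IsProfinite k ↥A := by
  have hb := hb_of_inducing hW.1
  -- pulled-back cofinite submodules
  have hD : ∀ M : Cofin k W, (M.1.comap A.subtype) ∈ Cofin k ↥A := by
    intro M
    constructor
    · exact M.2.1.preimage continuous_subtype_val
    · haveI := M.2.2
      have hker : M.1.comap A.subtype ≤ LinearMap.ker (M.1.mkQ.comp A.subtype) := by
        intro a ha
        simp only [LinearMap.mem_ker, LinearMap.comp_apply, Submodule.mkQ_apply,
          Submodule.Quotient.mk_eq_zero]
        exact ha
      have hinj : Function.Injective
          ⇑(Submodule.liftQ _ (M.1.mkQ.comp A.subtype) hker) := by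
        rw [← LinearMap.ker_eq_bot]
        apply Submodule.ker_liftQ_eq_bot
        intro a ha
        simp only [LinearMap.mem_ker, LinearMap.comp_apply, Submodule.mkQ_apply,
          Submodule.Quotient.mk_eq_zero] at ha
        exact ha
      exact FiniteDimensional.of_injective _ hinj
  set DA : Cofin k W → Cofin k ↥A := fun N => ⟨N.1.comap A.subtype, hD N⟩ with hDAdef
  -- cofinality of the pulled-back submodules
  have hcofinal : ∀ B : Submodule k ↥A, IsOpen (B : Set ↥A) →
      ∃ M : Cofin k W, (DA M).1 ≤ B := by
    intro B hB
    obtain ⟨V, hV, hBV⟩ := isOpen_induced_iff.1 hB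
    have h0 : (0 : W) ∈ V := by
      have h1 : (0 : ↥A) ∈ B := B.zero_mem
      rw [← SetLike.mem_coe, ← hBV] at h1
      exact h1
    obtain ⟨N, hN, hsub⟩ := hb 0 V (hV.mem_nhds h0)
    refine ⟨⟨N, hN⟩, fun a ha => ?_⟩
    have h2 : (a : W) ∈ cos 0 N := by
      have ha' : (a : W) ∈ N := ha
      simpa [cos] using ha'
    have h3 : (a : W) ∈ V := hsub h2
    rw [← SetLike.mem_coe, ← hBV]
    exact h3
  refine ⟨inducing_of_hb ?_, ?_, ?_⟩
  · -- HB for A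
    intro a U hU
    rw [nhds_subtype_eq_comap] at hU
    obtain ⟨t, ht, hsub⟩ := Filter.mem_comap.1 hU
    obtain ⟨N, hN, hsubN⟩ := hb a.1 t ht
    refine ⟨N.comap A.subtype, hD ⟨N, hN⟩, ?_⟩
    intro y hy
    apply hsub
    show y.1 ∈ t
    apply hsubN
    show y.1 - a.1 ∈ N
    exact hy
  · -- injectivity
    intro a a' haa'
    have hmem : ∀ B ∈ Cofin k ↥A, (a - a') ∈ B := by
      intro B hB
      have h1 := congrFun haa' ⟨B, hB⟩
      rwa [show canonMap k ↥A a ⟨B, hB⟩ = Submodule.Quotient.mk a from rfl,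
        show canonMap k ↥A a' ⟨B, hB⟩ = Submodule.Quotient.mk a' from rfl,
        Submodule.Quotient.eq] at h1
    have h1 : ∀ N ∈ Cofin k W, (a - a' : ↥A).1 ∈ N := fun N hN => hmem _ (hD ⟨N, hN⟩)
    have h2 : (a - a' : ↥A).1 = 0 := eq_zero_of_forall_mem hW.2.1 h1
    have : a - a' = 0 := Subtype.ext h2
    rwa [sub_eq_zero] at this
  · -- range = limit
    apply Set.Subset.antisymm
    · rintro _ ⟨w, rfl⟩
      exact canonMap_mem_cofinLimit w
    intro f hf
    have hrep : ∀ N : Cofin k W, ∃ a : ↥A, Submodule.Quotient.mk a = f (DA N) :=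
      fun N => Submodule.Quotient.mk_surjective _ _
    choose r hr using hrep
    have hgcl : (fun N : Cofin k W => (Submodule.Quotient.mk (r N).1 : W ⧸ N.1)) ∈
        cofinLimit k W := by
      intro N N' h
      have hle : (DA N).1 ≤ (DA N').1 := fun z hz => h hz
      have hcomp := hf (DA N) (DA N') hle
      rw [← hr N, ← hr N', Submodule.mapQ_apply] at hcomp
      simp only [LinearMap.id_coe, id_eq] at hcomp
      rw [Submodule.Quotient.eq] at hcomp
      show Submodule.mapQ _ _ _ _ (Submodule.Quotient.mk (r N).1) =
        Submodule.Quotient.mk (r N').1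
      rw [Submodule.mapQ_apply]
      simp only [LinearMap.id_coe, id_eq]
      rw [Submodule.Quotient.eq]
      exact hcomp
    rw [← hW.2.2] at hgcl
    obtain ⟨w, hwg⟩ := hgcl
    have hwN : ∀ N : Cofin k W, w - (r N).1 ∈ N.1 := by
      intro N
      have h1 := congrFun hwg N
      rwa [show canonMap k W w N = Submodule.Quotient.mk w from rfl,
        Submodule.Quotient.eq] at h1
    have hwA : w ∈ A := by
      have hcl : w ∈ closure (A : Set W) := by
        rw [mem_closure_iff_cofin hb]
        intro N hN
        exact ⟨(r ⟨N, hN⟩).1, (r ⟨N, hN⟩).2, hwN ⟨N, hN⟩⟩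
      rw [hA.closure_eq] at hcl
      exact hcl
    refine ⟨⟨w, hwA⟩, ?_⟩
    funext B
    obtain ⟨M, hM⟩ := hcofinal B.1 B.2.1
    have h1 := hf (DA M) B hM
    rw [← hr M, Submodule.mapQ_apply] at h1
    simp only [LinearMap.id_coe, id_eq] at h1
    show Submodule.Quotient.mk (⟨w, hwA⟩ : ↥A) = f B
    rw [← h1, Submodule.Quotient.eq]
    apply hM
    show ((⟨w, hwA⟩ - r M : ↥A) : W) ∈ M.1
    simpa using hwN M

end ProfAux

namespace ProfAux
set_option linter.unusedSectionVars false
open Topology Filter Module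

variable {k W : Type*} [Field k] [AddCommGroup W] [Module k W] [TopologicalSpace W]
  [IsTopologicalAddGroup W]

theorem profinite_quotient (hW : IsProfinite k W) (A : Submodule k W)
    (hA : IsClosed (A : Set W)) : IsProfinite k (W ⧸ A) := by
  have hb := hb_of_inducing hW.1
  have hDQ : ∀ N : Cofin k W, (N.1.map A.mkQ) ∈ Cofin k (W ⧸ A) := by
    intro N
    have hpre : A.mkQ ⁻¹' ((N.1.map A.mkQ : Submodule k (W ⧸ A)) : Set (W ⧸ A)) =
        ((N.1 ⊔ A : Submodule k W) : Set W) := by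
      have : Submodule.comap A.mkQ (N.1.map A.mkQ) = N.1 ⊔ A := by
        rw [Submodule.comap_map_eq, Submodule.ker_mkQ]
      exact congrArg SetLike.coe this
    constructor
    · rw [← (Submodule.isOpenQuotientMap_mkQ A).isQuotientMap.isOpen_preimage, hpre]
      exact submodule_isOpen_mono N.2.1 le_sup_left
    · haveI := N.2.2
      have hker : N.1 ≤ LinearMap.ker ((N.1.map A.mkQ).mkQ.comp A.mkQ) := by
        intro n hn
        simp only [LinearMap.mem_ker, LinearMap.comp_apply, Submodule.mkQ_apply,
          Submodule.Quotient.mk_eq_zero]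
        exact Submodule.mem_map_of_mem hn
      have hsurj : Function.Surjective ⇑(Submodule.liftQ _ _ hker) := by
        intro y
        obtain ⟨z, rfl⟩ := Submodule.Quotient.mk_surjective _ y
        obtain ⟨x, rfl⟩ := Submodule.Quotient.mk_surjective _ z
        exact ⟨Submodule.Quotient.mk x, by rw [Submodule.liftQ_apply]; rfl⟩
      exact Module.Finite.of_surjective _ hsurj
    
  set DQ : Cofin k W → Cofin k (W ⧸ A) := fun N => ⟨N.1.map A.mkQ, hDQ N⟩ with hDQdef
  have hcofinal : ∀ B : Submodule k (W ⧸ A), IsOpen (B : Set (W ⧸ A)) →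
      ∃ N : Cofin k W, (DQ N).1 ≤ B := by
    intro B hB
    have hpre : IsOpen (A.mkQ ⁻¹' (B : Set (W ⧸ A))) :=
      hB.preimage (Submodule.isOpenQuotientMap_mkQ A).continuous
    have h0 : (0 : W) ∈ A.mkQ ⁻¹' (B : Set (W ⧸ A)) := by
      simp [B.zero_mem]
    obtain ⟨N, hN, hsub⟩ := hb 0 _ (hpre.mem_nhds h0)
    refine ⟨⟨N, hN⟩, ?_⟩
    rintro _ ⟨n, hn, rfl⟩
    have : n ∈ cos 0 N := by simpa [cos] using hn
    exact hsub this
  have hmapbot : Submodule.map A.mkQ A = ⊥ := by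
    rw [eq_bot_iff]
    rintro _ ⟨a, ha, rfl⟩
    show A.mkQ a ∈ (⊥ : Submodule k (W ⧸ A))
    rw [Submodule.mem_bot, Submodule.mkQ_apply, Submodule.Quotient.mk_eq_zero]
    exact ha
  refine ⟨inducing_of_hb ?_, ?_, ?_⟩
  · -- HB
    intro q U hU
    obtain ⟨x, rfl⟩ := Submodule.Quotient.mk_surjective A q
    have hpre : A.mkQ ⁻¹' U ∈ 𝓝 x := by
      apply ContinuousAt.preimage_mem_nhds
        ((Submodule.isOpenQuotientMap_mkQ A).continuous.continuousAt)
      exact hU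
    obtain ⟨N, hN, hsub⟩ := hb x _ hpre
    refine ⟨(DQ ⟨N, hN⟩).1, (DQ ⟨N, hN⟩).2, ?_⟩
    intro y hy
    obtain ⟨n, hn, hny⟩ := hy
    have hyx : y = A.mkQ (n + x) := by
      have : A.mkQ n = y - Submodule.Quotient.mk x := hny
      rw [map_add, this, Submodule.mkQ_apply]
      abel
    rw [hyx]
    apply hsub
    show n + x - x ∈ N
    simpa using hn
  · -- injectivity
    intro q q' hqq'
    have hmem : ∀ B ∈ Cofin k (W ⧸ A), (q - q') ∈ B := by
      intro B hB
      have h1 := congrFun hqq' ⟨B, hB⟩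
      rwa [show canonMap k (W ⧸ A) q ⟨B, hB⟩ = Submodule.Quotient.mk q from rfl,
        show canonMap k (W ⧸ A) q' ⟨B, hB⟩ = Submodule.Quotient.mk q' from rfl,
        Submodule.Quotient.eq] at h1
    obtain ⟨x, hx⟩ := Submodule.Quotient.mk_surjective A (q - q')
    have hxN : ∀ N ∈ Cofin k W, ∃ s ∈ (A : Set W), x - s ∈ N := by
      intro N hN
      have h2 : A.mkQ x ∈ (DQ ⟨N, hN⟩).1 := by
        rw [Submodule.mkQ_apply, hx]
        exact hmem _ (DQ ⟨N, hN⟩).2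
      have h3 : x ∈ N ⊔ A := by
        have : x ∈ Submodule.comap A.mkQ (DQ ⟨N, hN⟩).1 := h2
        rwa [show (DQ ⟨N, hN⟩).1 = Submodule.map A.mkQ N from rfl,
          Submodule.comap_map_eq, Submodule.ker_mkQ] at this
      obtain ⟨n, hn, a, ha, hna⟩ := Submodule.mem_sup.1 h3
      exact ⟨a, ha, by rw [← hna]; simpa using hn⟩
    have hxA : x ∈ A := by
      have hcl : x ∈ closure (A : Set W) := by
        rw [mem_closure_iff_cofin hb]; exact hxN
      rwa [hA.closure_eq] at hcl
    have : q - q' = 0 := by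
      rw [← hx, Submodule.Quotient.mk_eq_zero]
      exact hxA
    rwa [sub_eq_zero] at this
  · -- range = limit
    apply Set.Subset.antisymm
    · rintro _ ⟨w, rfl⟩
      exact canonMap_mem_cofinLimit w
    intro f hf
    have hrepy : ∀ N : Cofin k W, ∃ y : W ⧸ A, Submodule.Quotient.mk y = f (DQ N) :=
      fun N => Submodule.Quotient.mk_surjective _ _
    choose y hy using hrepy
    have hrepx : ∀ N : Cofin k W, ∃ x : W, A.mkQ x = y N :=
      fun N => Submodule.Quotient.mk_surjective _ _
    choose x hxrep using hrepx
    haveI : Nonempty ↥(Cofin k W) := ⟨⟨⊤, top_mem_cofin⟩⟩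
    have hdiff : ∀ (i j : Cofin k W), i.1 ≤ j.1 → x i - x j ∈ A ⊔ j.1 := by
      intro i j hij
      have hle : (DQ i).1 ≤ (DQ j).1 := Submodule.map_mono hij
      have hcomp := hf (DQ i) (DQ j) hle
      rw [← hy i, ← hy j, Submodule.mapQ_apply] at hcomp
      simp only [LinearMap.id_coe, id_eq] at hcomp
      rw [Submodule.Quotient.eq] at hcomp
      have h2 : A.mkQ (x i - x j) ∈ (DQ j).1 := by
        rw [map_sub, hxrep i, hxrep j]
        exact hcomp
      have h3 : x i - x j ∈ j.1 ⊔ A := by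
        have : x i - x j ∈ Submodule.comap A.mkQ (DQ j).1 := h2
        rwa [show (DQ j).1 = Submodule.map A.mkQ j.1 from rfl,
          Submodule.comap_map_eq, Submodule.ker_mkQ] at this
      rwa [sup_comm] at h3
    obtain ⟨w, hw⟩ := fip hW x (fun N : Cofin k W => A ⊔ N.1)
      (fun N => submodule_isClosed_of_isOpen (submodule_isOpen_mono N.2.1 le_sup_right))
      (by
        intro i j
        refine ⟨infC i j, ?_, ?_⟩
        · intro z hz
          have hz' : z - x (infC i j) ∈ A ⊔ (infC i j).1 := hz
          have h1 : z - x (infC i j) ∈ A ⊔ i.1 :=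
            sup_le_sup_left (infC_le_left i j) A hz'
          have h2 : x (infC i j) - x i ∈ A ⊔ i.1 := hdiff _ _ (infC_le_left i j)
          show z - x i ∈ A ⊔ i.1
          have := add_mem h1 h2
          simpa [sub_add_sub_cancel] using this
        · intro z hz
          have hz' : z - x (infC i j) ∈ A ⊔ (infC i j).1 := hz
          have h1 : z - x (infC i j) ∈ A ⊔ j.1 :=
            sup_le_sup_left (infC_le_right i j) A hz'
          have h2 : x (infC i j) - x j ∈ A ⊔ j.1 := hdiff _ _ (infC_le_right i j)
          show z - x j ∈ A ⊔ j.1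
          have := add_mem h1 h2
          simpa [sub_add_sub_cancel] using this)
    refine ⟨A.mkQ w, ?_⟩
    funext B
    obtain ⟨N, hNle⟩ := hcofinal B.1 B.2.1
    have h1 := hf (DQ N) B hNle
    rw [← hy N, Submodule.mapQ_apply] at h1
    simp only [LinearMap.id_coe, id_eq] at h1
    show Submodule.Quotient.mk (A.mkQ w) = f B
    rw [← h1, Submodule.Quotient.eq]
    apply hNle
    have hwN : w - x N ∈ A ⊔ N.1 := hw N
    have : A.mkQ (w - x N) ∈ Submodule.map A.mkQ (A ⊔ N.1) :=
      Submodule.mem_map_of_mem hwN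
    rw [Submodule.map_sup, hmapbot, bot_sup_eq] at this
    rw [← hxrep N]
    show A.mkQ w - A.mkQ (x N) ∈ (DQ N).1
    rw [← map_sub]
    exact this

end ProfAux

namespace ProfAux
set_option linter.unusedSectionVars false
open Topology Filter Module

section Key
variable {k W₁ W₂ : Type*} [Field k]
  [AddCommGroup W₁] [Module k W₁] [TopologicalSpace W₁] [IsTopologicalAddGroup W₁]
  [AddCommGroup W₂] [Module k W₂] [TopologicalSpace W₂] [IsTopologicalAddGroup W₂]

theorem image_closed (h₁ : IsProfinite k W₁) (h₂ : IsProfinite k W₂)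
    (φ : W₁ →ₗ[k] W₂) (hφ : Continuous φ) (N : Submodule k W₁)
    (hN : IsClosed (N : Set W₁)) : IsClosed ((Submodule.map φ N : Submodule k W₂) : Set W₂) := by
  have hNprof : IsProfinite k ↥N := profinite_closed_submodule h₁ N hN
  have h := closed_range hNprof h₂ (φ.comp N.subtype) (hφ.comp continuous_subtype_val)
  have heq : Set.range ⇑(φ.comp N.subtype) = ((Submodule.map φ N : Submodule k W₂) : Set W₂) := by
    ext y
    constructor
    · rintro ⟨a, rfl⟩
      exact ⟨a.1, a.2, rfl⟩
    · rintro ⟨x, hx, rfl⟩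
      exact ⟨⟨x, hx⟩, rfl⟩
  rwa [heq] at h

theorem key_claim (h₁ : IsProfinite k W₁) (h₂ : IsProfinite k W₂)
    (φ : W₁ →ₗ[k] W₂) (hφ : Continuous φ) (N : Cofin k W₁) :
    ∃ M : Cofin k W₂, ∀ x ∈ LinearMap.range φ, x ∈ M.1 → x ∈ Submodule.map φ N.1 := by
  classical
  have hb₂ := hb_of_inducing h₂.1
  set P := LinearMap.range φ with hP
  set A := Submodule.map φ N.1 with hAdef
  have hAP : A ≤ P := by rintro _ ⟨x, _, rfl⟩; exact ⟨x, rfl⟩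
  have hAclosed : IsClosed (A : Set W₂) :=
    image_closed h₁ h₂ φ hφ N.1 (submodule_isClosed_of_isOpen N.2.1)
  haveI := N.2.2
  -- the image of P in W₂ ⧸ A is finite-dimensional
  have hker : N.1 ≤ LinearMap.ker (A.mkQ.comp φ) := by
    intro n hn
    simp only [LinearMap.mem_ker, LinearMap.comp_apply, Submodule.mkQ_apply,
      Submodule.Quotient.mk_eq_zero]
    exact Submodule.mem_map_of_mem hn
  have hrange : LinearMap.range (Submodule.liftQ N.1 (A.mkQ.comp φ) hker) =
      Submodule.map A.mkQ P := by
    ext y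
    constructor
    · rintro ⟨z, rfl⟩
      obtain ⟨x, rfl⟩ := Submodule.Quotient.mk_surjective _ z
      rw [Submodule.liftQ_apply]
      exact ⟨φ x, ⟨x, rfl⟩, rfl⟩
    · rintro ⟨_, ⟨x, rfl⟩, rfl⟩
      exact ⟨Submodule.Quotient.mk x, by rw [Submodule.liftQ_apply]; rfl⟩
  haveI hPfin : Module.Finite k ↥(Submodule.map A.mkQ P) := by
    rw [← hrange]
    exact Module.Finite.range _
  set C : Cofin k W₂ → Submodule k W₂ := fun M => A ⊔ (P ⊓ M.1) with hC
  set D : Cofin k W₂ → Submodule k (W₂ ⧸ A) := fun M => Submodule.map A.mkQ (C M) with hDdef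
  have hCA : ∀ M, A ≤ C M := fun M => le_sup_left
  have hCP : ∀ M, C M ≤ P := fun M => sup_le hAP inf_le_left
  haveI hDfin : ∀ M, FiniteDimensional k ↥(D M) := fun M =>
    Submodule.finiteDimensional_of_le (Submodule.map_mono (hCP M))
  haveI : Nonempty ↥(Cofin k W₂) := ⟨⟨⊤, top_mem_cofin⟩⟩
  have hmem := Nat.sInf_mem (Set.range_nonempty (fun M : Cofin k W₂ => finrank k ↥(D M)))
  rw [Set.mem_range] at hmem
  obtain ⟨M₀, hM₀⟩ := hmem
  have hCcomap : ∀ M, Submodule.comap A.mkQ (D M) = C M := by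
    intro M
    rw [hDdef, Submodule.comap_map_eq, Submodule.ker_mkQ, sup_eq_left.2 (hCA M)]
  have hCleast : ∀ M, C M₀ ≤ C M := by
    intro M
    have h1 : C (infC M₀ M) ≤ C M₀ :=
      sup_le_sup_left (inf_le_inf le_rfl (infC_le_left _ _)) A
    have h2 : C (infC M₀ M) ≤ C M :=
      sup_le_sup_left (inf_le_inf le_rfl (infC_le_right _ _)) A
    have h3 : D (infC M₀ M) ≤ D M₀ := Submodule.map_mono h1
    have h4 : finrank k ↥(D M₀) ≤ finrank k ↥(D (infC M₀ M)) := by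
      rw [hM₀]
      exact Nat.sInf_le ⟨infC M₀ M, rfl⟩
    have h5 : D (infC M₀ M) = D M₀ := Submodule.eq_of_le_of_finrank_le h3 h4
    calc C M₀ = Submodule.comap A.mkQ (D M₀) := (hCcomap M₀).symm
      _ = Submodule.comap A.mkQ (D (infC M₀ M)) := by rw [h5]
      _ = C (infC M₀ M) := hCcomap _
      _ ≤ C M := h2
  refine ⟨M₀, fun x hxP hxM₀ => ?_⟩
  have hx : x ∈ C M₀ := Submodule.mem_sup_right ⟨hxP, hxM₀⟩
  have hxA : x ∈ closure (A : Set W₂) := by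
    rw [mem_closure_iff_cofin hb₂]
    intro M hM
    have h1 : x ∈ C ⟨M, hM⟩ := hCleast ⟨M, hM⟩ hx
    have h2 : x ∈ A ⊔ M := sup_le_sup_left inf_le_right A h1
    obtain ⟨a, ha, m, hm, hsum⟩ := Submodule.mem_sup.1 h2
    exact ⟨a, ha, by rw [← hsum]; simpa using hm⟩
  rwa [hAclosed.closure_eq] at hxA

end Key
end ProfAux

/-- A continuous linear map `φ : W₁ → W₂` between profinite topological
modules over a field is strict (the image of any open set is open in the range with its
subspace topology, i.e. `φ` factors as a topological quotient map followed by a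
topological embedding), its kernel, image and cokernel with their induced topologies are
profinite, and its image is closed. -/
theorem strict_of_continuous_profinite (k W₁ W₂ : Type*) [Field k]
    [AddCommGroup W₁] [Module k W₁] [TopologicalSpace W₁] [IsTopologicalAddGroup W₁]
    [ContinuousConstSMul k W₁]
    [AddCommGroup W₂] [Module k W₂] [TopologicalSpace W₂] [IsTopologicalAddGroup W₂]
    [ContinuousConstSMul k W₂]
    (h₁ : IsProfinite k W₁) (h₂ : IsProfinite k W₂)
    (φ : W₁ →ₗ[k] W₂) (hφ : Continuous φ) :
    (∀ U : Set W₁, IsOpen U → ∃ V : Set W₂, IsOpen V ∧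
      V ∩ Set.range φ = φ '' U) ∧
    IsClosed (Set.range φ) ∧
    IsProfinite k (LinearMap.ker φ) ∧
    IsProfinite k (LinearMap.range φ) ∧
    IsProfinite k (W₂ ⧸ LinearMap.range φ) := by
  classical
  have hb₁ := ProfAux.hb_of_inducing h₁.1
  have hkerclosed : IsClosed ((LinearMap.ker φ : Submodule k W₁) : Set W₁) := by
    have heq : ((LinearMap.ker φ : Submodule k W₁) : Set W₁) =
        ⋂ M : Cofin k W₂, φ ⁻¹' (M.1 : Set W₂) := by
      ext x
      simp only [Set.mem_iInter, SetLike.mem_coe, LinearMap.mem_ker, Set.mem_preimage]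
      constructor
      · intro h M
        rw [h]
        exact M.1.zero_mem
      · intro h
        exact ProfAux.eq_zero_of_forall_mem h₂.2.1 (fun M hM => h ⟨M, hM⟩)
    rw [heq]
    exact isClosed_iInter fun M =>
      (ProfAux.submodule_isClosed_of_isOpen M.2.1).preimage hφ
  have hrangeclosed : IsClosed (Set.range φ) := ProfAux.closed_range h₁ h₂ φ hφ
  have hrangeclosed' : IsClosed ((LinearMap.range φ : Submodule k W₂) : Set W₂) := by
    rwa [show ((LinearMap.range φ : Submodule k W₂) : Set W₂) = Set.range ⇑φ from
      LinearMap.coe_range φ]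
  refine ⟨?_, hrangeclosed, ProfAux.profinite_closed_submodule h₁ _ hkerclosed,
    ProfAux.profinite_closed_submodule h₂ _ hrangeclosed',
    ProfAux.profinite_quotient h₂ _ hrangeclosed'⟩
  intro U hU
  have hNu : ∀ u : W₁, u ∈ U → ∃ N : Cofin k W₁, ProfAux.cos u N.1 ⊆ U := by
    intro u hu
    obtain ⟨N, hN, hsub⟩ := hb₁ u U (hU.mem_nhds hu)
    exact ⟨⟨N, hN⟩, hsub⟩
  choose N hNsub using hNu
  choose M hM using fun (u : W₁) (hu : u ∈ U) => ProfAux.key_claim h₁ h₂ φ hφ (N u hu)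
  refine ⟨⋃ (u : W₁) (hu : u ∈ U),
    ProfAux.cos (φ u) (Submodule.map φ (N u hu).1 ⊔ (M u hu).1), ?_, ?_⟩
  · apply isOpen_iUnion
    intro u
    apply isOpen_iUnion
    intro hu
    exact ProfAux.cos_isOpen
      (ProfAux.submodule_isOpen_mono (M u hu).2.1 le_sup_right) _
  · apply Set.Subset.antisymm
    · rintro x ⟨hxV, hxr⟩
      rw [Set.mem_iUnion₂] at hxV
      obtain ⟨u, hu, hx⟩ := hxV
      have hxr' : x ∈ LinearMap.range φ := hxr
      have hx' : x - φ u ∈ Submodule.map φ (N u hu).1 ⊔ (M u hu).1 := hx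
      obtain ⟨a, ha, m, hm, hsum⟩ := Submodule.mem_sup.1 hx'
      have haR : a ∈ LinearMap.range φ := by
        obtain ⟨n, _, rfl⟩ := ha
        exact ⟨n, rfl⟩
      have hmR : m ∈ LinearMap.range φ := by
        have h1 : m = x - φ u - a := by rw [← hsum]; abel
        rw [h1]
        exact sub_mem (sub_mem hxr' ⟨u, rfl⟩) haR
      have hmA : m ∈ Submodule.map φ (N u hu).1 := hM u hu m hmR hm
      have hxu : x - φ u ∈ Submodule.map φ (N u hu).1 := by
        rw [← hsum]
        exact add_mem ha hmA
      obtain ⟨n, hn, hφn⟩ := hxu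
      refine ⟨u + n, hNsub u hu ?_, ?_⟩
      · show u + n - u ∈ (N u hu).1
        simpa using hn
      · rw [map_add, hφn]
        abel
    · rintro _ ⟨u, hu, rfl⟩
      refine ⟨?_, ⟨u, rfl⟩⟩
      rw [Set.mem_iUnion₂]
      exact ⟨u, hu, ProfAux.self_mem_cos _ _⟩
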